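/- arXiv:1602.07585 — 6 statements merged into one kernel-verified Lean document; each statement's English description precedes it below -/
import Mathlib

section
/- Let k be a field, let n > m be natural numbers, and suppose that for every subset I of {1,...,n} with |I| = m we are given a nonzero vector v_I in k^n whose projection onto the coordinate subspace spanned by the coordinates in I is zero (i.e., (v_I)_i = 0 for all i in I). Then the k-linear span of the vectors {v_I : I ⊆ {1,...,n}, |I| = m} has dimension at least m + 1. -/
/-!
The coordinate functionals separate the points of a subspace `W ⊆ kⁿ`, so some `dim W` of them
already span its dual; a vector of `W` vanishing at those coordinates is zero. If the span of the
`v_I` had dimension at most `m`, such a set of coordinates would lie in some `I` with `|I| = m`,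
forcing `v_I = 0`.
-/

open Module

theorem Submodule.exists_finset_card_le_finrank_detecting_zero
    {k ι : Type*} [Field k] (W : Submodule k (ι → k)) [FiniteDimensional k W] :
    ∃ J : Finset ι, J.card ≤ finrank k W ∧ ∀ w ∈ W, (∀ j ∈ J, w j = 0) → w = 0 := by
  let coord : ι → Dual k W := fun i => (LinearMap.proj i).comp W.subtype
  have hspan : span k (Set.range coord) = ⊤ := by
    refine span_eq_top_of_ne_zero fun w hw => ?_
    obtain ⟨i, hi⟩ := Function.ne_iff.mp (Subtype.coe_ne_coe.mpr hw)
    exact ⟨coord i, Set.mem_range_self i, hi⟩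
  obtain ⟨b, -, -, hcover, hind⟩ :=
    exists_linearIndepOn_extension (linearIndepOn_empty k coord) (Set.empty_subset Set.univ)
  have : Fintype b := @Fintype.ofFinite _ hind.finite
  refine ⟨b.toFinset, ?_, fun w hw hJ => ?_⟩
  · simpa using hind.linearIndependent.fintype_card_le_finrank
  · have hb : span k (coord '' b) = ⊤ := by
      rw [eq_top_iff, ← hspan, span_le, ← Set.image_univ]
      exact hcover
    have hker : span k (coord '' b) ≤ LinearMap.ker (Dual.eval k W ⟨w, hw⟩) := by
      rw [span_le]
      rintro _ ⟨j, hj, rfl⟩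
      exact hJ j (Set.mem_toFinset.mpr hj)
    have : (⟨w, hw⟩ : W) = 0 := (forall_dual_apply_eq_zero_iff k _).mp fun f =>
      hker (hb ▸ mem_top : f ∈ _)
    simpa using this

theorem stmt_0 (k : Type*) [Field k] (n m : ℕ) (hnm : m < n)
    (v : {I : Finset (Fin n) // I.card = m} → (Fin n → k))
    (hv0 : ∀ I, v I ≠ 0)
    (hvI : ∀ I, ∀ i ∈ I.1, v I i = 0) :
    m + 1 ≤ Module.finrank k (Submodule.span k (Set.range v)) := by
  have : FiniteDimensional k (Submodule.span k (Set.range v)) :=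
    FiniteDimensional.span_of_finite k (Set.finite_range v)
  by_contra! hsmall
  obtain ⟨J, hJ, hdetect⟩ :=
    (Submodule.span k (Set.range v)).exists_finset_card_le_finrank_detecting_zero
  obtain ⟨I, hJI, -, hI⟩ := Finset.exists_subsuperset_card_eq (n := m) (Finset.subset_univ J)
    (by omega) (by simpa using hnm.le)
  exact hv0 ⟨I, hI⟩ <| hdetect _ (Submodule.subset_span (Set.mem_range_self _))
    fun j hj => hvI ⟨I, hI⟩ j (hJI hj)
end

section
/- Let A be an r × n integer matrix with n > r whose associated linear map Z^n → Z^r is surjective. Then the lattice ker_Z(A) ⊆ Z^n is generated, as an abelian group, by its elements having at most r + 1 nonzero entries. -/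
/-!
Write `K_T` for the integer kernel vectors supported in `T`. By induction on `|T|` it suffices to
show that for `|T| ≥ r + 2` the lattice `K_T` is the sum `S` of the `K_{T ∖ i}`, `i ∈ T`.
Since `K_T = K_{T ∖ i} + ℤ u_i` for a suitable `u_i`, the quotient `K_T / S` is cyclic, so it is
enough that `K_T = S + p K_T` for every prime `p`. Reduce mod `p`: the image of `K_T` is spanned by
`ū_i` and the image of `K_{T ∖ i}`, so if the image of `S` were proper it would equal the image of
each `K_{T ∖ i}` and hence vanish. That is impossible because `K_{T ∖ i}` is nonzero
(`|T ∖ i| > r`) and saturated, so not contained in `p ℤ^n`. Once the images agree, saturation of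
`K_T` lifts `v ≡ s (mod p)` to `v ∈ S + p K_T`.
-/

open Submodule LinearMap

theorem Submodule.eq_of_le_of_le_span_singleton_sup {K V : Type*} [DivisionRing K]
    [AddCommGroup V] [Module K V] {A B : Submodule K V} {u : V} (hAB : A ≤ B)
    (hB : B ≤ span K {u} ⊔ A) (hu : u ∉ B) : B = A := by
  refine le_antisymm (fun x hx => ?_) hAB
  obtain ⟨y, hy, a, ha, rfl⟩ := mem_sup.1 (hB hx)
  obtain ⟨c, rfl⟩ := mem_span_singleton.1 hy
  have hcu : c • u ∈ B := by simpa using B.sub_mem hx (hAB ha)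
  by_cases hc : c = 0
  · simpa [hc] using ha
  · exact absurd ((B.smul_mem_iff hc).1 hcu) hu

theorem Int.ideal_eq_top_of_forall_prime {J : Ideal ℤ}
    (h : ∀ q : ℕ, q.Prime → ∃ c : ℤ, 1 - q * c ∈ J) : J = ⊤ := by
  by_contra hJ
  have he : (IsPrincipal.generator J).natAbs ≠ 1 := fun h1 => hJ <| by
    rw [← IsPrincipal.span_singleton_generator J]
    exact Ideal.span_singleton_eq_top.2 (Int.isUnit_iff_natAbs_eq.2 h1)
  obtain ⟨q, hq, hqe⟩ := Nat.exists_prime_and_dvd he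
  obtain ⟨c, hc⟩ := h q hq
  have hq1 : (q : ℤ) ∣ 1 - q * c :=
    (Int.natCast_dvd.2 hqe).trans ((IsPrincipal.mem_iff_generator_dvd J).1 hc)
  have : (q : ℤ) ∣ 1 := by simpa using hq1.add (dvd_mul_right (q : ℤ) c)
  exact hq.one_lt.ne' (by exact_mod_cast Int.eq_one_of_dvd_one (by positivity) this)

theorem AddSubmonoid.NSMulSaturated.inf {M : Type*} [AddMonoid M] {H K : AddSubmonoid M}
    (hH : H.NSMulSaturated) (hK : K.NSMulSaturated) : (H ⊓ K).NSMulSaturated := by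
  intro n x hx
  rcases hH hx.1 with hn | hxH
  · exact .inl hn
  · exact (hK hx.2).imp id fun hxK => ⟨hxH, hxK⟩

section Lattice

variable {ι : Type*}

def reduceMod (p : ℕ) : (ι → ℤ) →ₗ[ℤ] ι → ZMod p :=
  (Int.castAddHom (ZMod p)).toIntLinearMap.compLeft ι

@[simp]
theorem reduceMod_apply (p : ℕ) (x : ι → ℤ) (i : ι) : reduceMod p x i = x i := rfl

theorem exists_eq_smul_of_reduceMod_eq_zero {L : Submodule ℤ (ι → ℤ)}
    (hsat : L.toAddSubmonoid.NSMulSaturated) {p : ℕ} (hp : p ≠ 0) {x : ι → ℤ} (hx : x ∈ L)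
    (h0 : reduceMod p x = 0) : ∃ k ∈ L, x = (p : ℤ) • k := by
  have hdvd (i : ι) : (p : ℤ) ∣ x i :=
    (ZMod.intCast_zmod_eq_zero_iff_dvd _ _).1 (congrFun h0 i)
  have hx' : x = p • fun i => x i / p := by
    ext i; simp [Int.mul_ediv_cancel' (hdvd i)]
  refine ⟨_, (hsat (hx' ▸ hx)).resolve_left hp, ?_⟩
  rwa [natCast_zsmul]

-- The image of a lattice mod `p` is already closed under `ZMod p`-scalars, so no span is needed.
def modP (p : ℕ) (L : Submodule ℤ (ι → ℤ)) : Submodule (ZMod p) (ι → ZMod p) :=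
  AddSubgroup.toZModSubmodule p (L.map (reduceMod p)).toAddSubgroup

theorem mem_modP {p : ℕ} {L : Submodule ℤ (ι → ℤ)} {y : ι → ZMod p} :
    y ∈ modP p L ↔ ∃ x ∈ L, reduceMod p x = y := Iff.rfl

theorem modP_mono {p : ℕ} {L L' : Submodule ℤ (ι → ℤ)} (h : L ≤ L') : modP p L ≤ modP p L' :=
  fun _ ⟨x, hx, hxy⟩ => ⟨x, h hx, hxy⟩

theorem eq_bot_of_modP_eq_bot {L : Submodule ℤ (ι → ℤ)} (hsat : L.toAddSubmonoid.NSMulSaturated)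
    {p : ℕ} (hp : 1 < p) (h : modP p L = ⊥) : L = ⊥ := by
  have hdiv (m : ℕ) : ∀ x ∈ L, ∃ k, x = ((p : ℤ) ^ m) • k := by
    induction m with
    | zero => exact fun x _ => ⟨x, by simp⟩
    | succ m ih =>
      intro x hx
      obtain ⟨k, hk, rfl⟩ := exists_eq_smul_of_reduceMod_eq_zero (p := p) hsat (by omega) hx
        (by simpa [h] using (mem_modP (p := p)).2 ⟨x, hx, rfl⟩)
      obtain ⟨k', rfl⟩ := ih k hk
      exact ⟨k', by rw [smul_smul, pow_succ']⟩
  refine eq_bot_iff.2 fun x hx => (mem_bot ℤ).2 (funext fun i => ?_)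
  obtain ⟨k, hk⟩ := hdiv (x i).natAbs x hx
  refine Int.eq_zero_of_dvd_of_natAbs_lt_natAbs ⟨k i, congrFun hk i⟩ ?_
  simpa [Int.natAbs_pow] using Nat.lt_pow_self hp

theorem exists_forall_sub_smul_mem_inf_ker_proj (L : Submodule ℤ (ι → ℤ)) (i : ι) :
    ∃ u ∈ L, ∀ x ∈ L, ∃ c : ℤ, x - c • u ∈ L ⊓ ker (proj i) := by
  obtain ⟨u, hu, hui⟩ := IsPrincipal.generator_mem (L.map (proj i))
  refine ⟨u, hu, fun x hx => ?_⟩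
  obtain ⟨c, hc⟩ := (IsPrincipal.mem_iff_eq_smul_generator (L.map (proj i))).1 ⟨x, hx, rfl⟩
  refine ⟨c, L.sub_mem hx (L.smul_mem c hu), ?_⟩
  simp_all

variable {L : Submodule ℤ (ι → ℤ)} {T : Set ι} {i₀ : ι}

theorem exists_eq_add_smul_of_nsmulSaturated (hL : ∀ x ∈ L, ∀ i ∉ T, x i = 0)
    (hsat : L.toAddSubmonoid.NSMulSaturated) (hi₀ : i₀ ∈ T) (hL₀ : L ⊓ ker (proj i₀) ≠ ⊥)
    {p : ℕ} (hp : p.Prime) {v : ι → ℤ} (hv : v ∈ L) :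
    ∃ s ∈ ⨆ i ∈ T, L ⊓ ker (proj i), ∃ k ∈ L, v = s + (p : ℤ) • k := by
  have := Fact.mk hp
  set S := ⨆ i ∈ T, L ⊓ ker (proj i)
  have hSL : S ≤ L := iSup₂_le fun _ _ => inf_le_left
  have hLS (i : ι) (hi : i ∈ T) : L ⊓ ker (proj i) ≤ S :=
    le_iSup₂ (f := fun i (_ : i ∈ T) => L ⊓ ker (proj i)) i hi
  suffices hKW : modP p L ≤ modP p S by
    obtain ⟨s, hs, hsv⟩ := mem_modP.1 (hKW (mem_modP.2 ⟨v, hv, rfl⟩))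
    obtain ⟨k, hk, hvs⟩ := exists_eq_smul_of_reduceMod_eq_zero hsat hp.ne_zero
      (L.sub_mem hv (hSL hs)) (by rw [map_sub, hsv, sub_self])
    exact ⟨s, hs, k, hk, by rw [← hvs, add_sub_cancel]⟩
  by_contra hKW
  choose u hu hsplit using exists_forall_sub_smul_mem_inf_ker_proj L
  have hK_le (i : ι) :
      modP p L ≤ span (ZMod p) {reduceMod p (u i)} ⊔ modP p (L ⊓ ker (proj i)) := by
    rintro _ ⟨x, hx, rfl⟩
    obtain ⟨c, hc⟩ := hsplit i x hx
    have hx' : reduceMod p x = (c : ZMod p) • reduceMod p (u i) + reduceMod p (x - c • u i) := by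
      ext j; simp
    rw [hx']
    exact add_mem (mem_sup_left (smul_mem _ _ (mem_span_singleton_self _)))
      (mem_sup_right ⟨_, hc, rfl⟩)
  -- If `modP p S` were proper, the modular law would make it equal to every
  -- `modP p (L ⊓ ker (proj i))`, so it would vanish in every coordinate.
  have hW_eq (i : ι) (hi : i ∈ T) : modP p S = modP p (L ⊓ ker (proj i)) :=
    eq_of_le_of_le_span_singleton_sup (modP_mono (hLS i hi)) ((modP_mono hSL).trans (hK_le i))
      fun hui => hKW ((hK_le i).trans
        (sup_le (span_le.2 (Set.singleton_subset_iff.2 hui)) (modP_mono (hLS i hi))))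
  have hW_bot : modP p S = ⊥ := by
    refine eq_bot_iff.2 fun w hw => (mem_bot _).2 (funext fun i => ?_)
    by_cases hi : i ∈ T
    · obtain ⟨x, hx, rfl⟩ := hW_eq i hi ▸ hw
      simp [show x i = 0 from hx.2]
    · obtain ⟨x, hx, rfl⟩ := modP_mono hSL hw
      simp [hL x hx i hi]
  have hsat₀ : (L ⊓ ker (proj i₀)).toAddSubmonoid.NSMulSaturated :=
    hsat.inf (AddSubmonoid.ker_saturated (proj i₀ : (ι → ℤ) →ₗ[ℤ] ℤ).toAddMonoidHom)
  exact hL₀ (eq_bot_of_modP_eq_bot hsat₀ hp.one_lt (hW_eq i₀ hi₀ ▸ hW_bot))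

theorem le_iSup_inf_ker_proj_of_nsmulSaturated (hL : ∀ x ∈ L, ∀ i ∉ T, x i = 0)
    (hsat : L.toAddSubmonoid.NSMulSaturated) (hi₀ : i₀ ∈ T) (hL₀ : L ⊓ ker (proj i₀) ≠ ⊥) :
    L ≤ ⨆ i ∈ T, L ⊓ ker (proj i) := by
  set S := ⨆ i ∈ T, L ⊓ ker (proj i)
  have hS₀ : L ⊓ ker (proj i₀) ≤ S :=
    le_iSup₂ (f := fun i (_ : i ∈ T) => L ⊓ ker (proj i)) i₀ hi₀
  obtain ⟨u, hu, hsplit⟩ := exists_forall_sub_smul_mem_inf_ker_proj L i₀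
  have huS : u ∈ S := by
    have h1 : S.comap (toSpanSingleton ℤ _ u) = ⊤ := by
      refine Int.ideal_eq_top_of_forall_prime fun q hq => ?_
      obtain ⟨s, hs, k, hk, hu_eq⟩ := exists_eq_add_smul_of_nsmulSaturated hL hsat hi₀ hL₀ hq hu
      obtain ⟨c, hc⟩ := hsplit k hk
      refine ⟨c, ?_⟩
      have : (1 - (q : ℤ) * c) • u = s + (q : ℤ) • (k - c • u) := by
        linear_combination (norm := module) hu_eq
      rw [mem_comap, toSpanSingleton_apply, this]
      exact S.add_mem hs (S.smul_mem _ (hS₀ hc))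
    simpa using h1.ge (mem_top (x := 1))
  intro x hx
  obtain ⟨c, hc⟩ := hsplit x hx
  simpa using S.add_mem (hS₀ hc) (S.smul_mem c huS)

end Lattice

section Matrix

open Matrix

variable {m ι : Type*} [Fintype ι] [DecidableEq ι]

-- Encoded as a kernel so that saturation and the rank count are available directly.
def supportedKer (A : Matrix m ι ℤ) (T : Finset ι) : Submodule ℤ (ι → ℤ) :=
  ker (A.mulVecLin.prod (funLeft ℤ ℤ ((↑) : ↥(Tᶜ) → ι)))

variable {A : Matrix m ι ℤ} {T : Finset ι}

theorem mem_supportedKer {x : ι → ℤ} :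
    x ∈ supportedKer A T ↔ A *ᵥ x = 0 ∧ ∀ i ∉ T, x i = 0 := by
  simp [supportedKer, funext_iff, funLeft_apply]

theorem supportedKer_nsmulSaturated : (supportedKer A T).toAddSubmonoid.NSMulSaturated :=
  AddSubmonoid.ker_saturated (A.mulVecLin.prod (funLeft ℤ ℤ ((↑) : ↥(Tᶜ) → ι))).toAddMonoidHom

theorem supportedKer_inf_ker_proj (i : ι) :
    supportedKer A T ⊓ ker (proj i) = supportedKer A (T.erase i) := by
  ext x
  simp only [mem_inf, mem_supportedKer, mem_ker, proj_apply, Finset.mem_erase]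
  grind

theorem supportedKer_ne_bot [Fintype m] (h : Fintype.card m < T.card) : supportedKer A T ≠ ⊥ := by
  intro hbot
  have hrank := finrank_le_finrank_of_injective (ker_eq_bot.1 hbot)
  simp only [Module.finrank_prod, Module.finrank_fintype_fun_eq_card, Fintype.card_coe,
    Finset.card_compl] at hrank
  have := T.card_le_univ
  omega

theorem supportedKer_le_span [Fintype m] (T : Finset ι) :
    supportedKer A T ≤ span ℤ {w | A *ᵥ w = 0 ∧
      (Finset.univ.filter fun i => w i ≠ 0).card ≤ Fintype.card m + 1} := by
  induction T using Finset.strongInduction with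
  | H T ih =>
  by_cases hT : T.card ≤ Fintype.card m + 1
  · intro w hw
    rw [mem_supportedKer] at hw
    refine subset_span ⟨hw.1, le_trans (Finset.card_le_card fun i hi => ?_) hT⟩
    by_contra hiT
    exact (Finset.mem_filter.1 hi).2 (hw.2 i hiT)
  · obtain ⟨i₀, hi₀⟩ : T.Nonempty := by rw [← Finset.card_pos]; omega
    have hsplit := le_iSup_inf_ker_proj_of_nsmulSaturated (T := (T : Set ι))
      (fun x hx => (mem_supportedKer.1 hx).2) supportedKer_nsmulSaturated hi₀ (by
        rw [supportedKer_inf_ker_proj]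
        exact supportedKer_ne_bot (A := A) (by rw [Finset.card_erase_of_mem hi₀]; omega))
    refine hsplit.trans (iSup₂_le fun i hi => ?_)
    rw [supportedKer_inf_ker_proj]
    exact ih _ (Finset.erase_ssubset hi)

end Matrix

theorem stmt_1_general (r n : ℕ) (A : Matrix (Fin r) (Fin n) ℤ) :
    ∀ v : Fin n → ℤ, A.mulVec v = 0 →
      v ∈ AddSubgroup.closure {w : Fin n → ℤ | A.mulVec w = 0 ∧
        (Finset.univ.filter fun i => w i ≠ 0).card ≤ r + 1} := by
  intro v hv
  rw [← Submodule.span_int_eq_addSubgroupClosure]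
  simpa only [Fintype.card_fin, mem_toAddSubgroup] using
    supportedKer_le_span (A := A) Finset.univ (mem_supportedKer.2 ⟨hv, by simp⟩)

theorem stmt_1 (r n : ℕ) (hrn : r < n) (A : Matrix (Fin r) (Fin n) ℤ)
    (hsurj : Function.Surjective A.mulVec) :
    ∀ v : Fin n → ℤ, A.mulVec v = 0 →
      v ∈ AddSubgroup.closure {w : Fin n → ℤ | A.mulVec w = 0 ∧
        (Finset.univ.filter fun i => w i ≠ 0).card ≤ r + 1} :=
  stmt_1_general r n A
end

section
/- Let A be an r × n integer matrix with columns m_1, ..., m_n, let L = ker_Z(A) ∩ N^n be the semigroup of exponent vectors of monomial invariants, and let S ⊆ L be a subsemigroup. Suppose that (i) for every subset I ⊆ {1,...,n}, every element of L supported in I lies in the subgroup of Z^n generated by the elements of S supported in I, and (ii) for every α ∈ L and every i with α_i ≠ 0, there exists γ ∈ S with γ_i ≠ 0 and supp(γ) ⊆ supp(α). Then for any field k and any two points u, v ∈ k^n: if there exists α ∈ L with u^α ≠ v^α (where u^α := ∏_i u_i^{α_i}), then there exists γ ∈ S with u^γ ≠ v^γ. -/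
/-!
Suppose every `γ ∈ S` has `u^γ = v^γ`, and let `α ∈ L`. If `u` or `v` vanishes at some
`i ∈ supp α`, condition (ii) gives `γ ∈ S` with `i ∈ supp γ ⊆ supp α`; then `u^γ = v^γ = 0`, so
each of `u`, `v` vanishes somewhere on `supp α` and `u^α = v^α = 0`. Otherwise `u` and `v` are
units on `I = supp α`, and `β ↦ ∏ (u_i / v_i)^{β_i}` is a character of `ℤ^I` killing every
`γ ∈ S` supported in `I`; by condition (i) it kills `α`, i.e. `u^α = v^α`.
-/

open Finset

section Monomial

variable {ι : Type*} [Fintype ι]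

theorem prod_pow_congr_of_support {M : Type*} [CommMonoid M] {x y : ι → M} {β : ι → ℕ}
    (h : ∀ i, β i ≠ 0 → x i = y i) : ∏ i, x i ^ β i = ∏ i, y i ^ β i :=
  prod_congr rfl fun i _ => by
    by_cases hi : β i = 0
    · simp [hi]
    · rw [h i hi]

theorem prod_pow_eq_zero_iff {M : Type*} [CommMonoidWithZero M] [NoZeroDivisors M]
    [Nontrivial M] {x : ι → M} {β : ι → ℕ} :
    ∏ i, x i ^ β i = 0 ↔ ∃ i, β i ≠ 0 ∧ x i = 0 := by
  simp only [prod_eq_zero_iff, mem_univ, true_and, pow_eq_zero_iff', and_comm]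

theorem prod_pow_eq_zero_of_support_subset {M : Type*} [CommMonoidWithZero M] [NoZeroDivisors M]
    [Nontrivial M] {x : ι → M} {α γ : ι → ℕ} (hsupp : ∀ j, γ j ≠ 0 → α j ≠ 0)
    (h : ∏ i, x i ^ γ i = 0) : ∏ i, x i ^ α i = 0 := by
  obtain ⟨j, hγj, hxj⟩ := prod_pow_eq_zero_iff.1 h
  exact prod_pow_eq_zero_iff.2 ⟨j, hsupp j hγj, hxj⟩

end Monomial

section Character

variable {ι G : Type*} [Fintype ι] [CommGroup G]

def zpowProdHom (w : ι → G) : (ι → ℤ) →+ Additive G where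
  toFun β := Additive.ofMul (∏ i, w i ^ β i)
  map_zero' := by simp
  map_add' β β' := by
    simp only [Pi.add_apply, zpow_add, prod_mul_distrib]
    rfl

theorem zpowProdHom_natCast (w : ι → G) (γ : ι → ℕ) :
    zpowProdHom w (fun i => (γ i : ℤ)) = Additive.ofMul (∏ i, w i ^ γ i) := by
  simp [zpowProdHom]

theorem prod_pow_eq_of_mem_closure {u v : ι → G} {T : Set (ι → ℕ)}
    (hT : ∀ γ ∈ T, ∏ i, u i ^ γ i = ∏ i, v i ^ γ i) {α : ι → ℕ}
    (hα : (fun i => (α i : ℤ)) ∈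
      AddSubgroup.closure ((fun γ : ι → ℕ => fun i => (γ i : ℤ)) '' T)) :
    ∏ i, u i ^ α i = ∏ i, v i ^ α i := by
  have hker (γ : ι → ℕ) : zpowProdHom (u / v) (fun i => (γ i : ℤ)) = 0 ↔
      ∏ i, u i ^ γ i = ∏ i, v i ^ γ i := by
    rw [zpowProdHom_natCast, ofMul_eq_zero]
    simp only [Pi.div_apply, div_pow, prod_div_distrib, div_eq_one]
  have hle : AddSubgroup.closure ((fun γ : ι → ℕ => fun i => (γ i : ℤ)) '' T) ≤
      (zpowProdHom (u / v)).ker := by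
    rw [AddSubgroup.closure_le]
    rintro _ ⟨γ, hγ, rfl⟩
    exact (hker γ).2 (hT γ hγ)
  exact (hker α).1 (hle hα)

end Character

section Field

variable {ι k : Type*} [Fintype ι] [Field k]

open Classical in
noncomputable def unitOrOne (x : k) : kˣ := if h : x = 0 then 1 else Units.mk0 x h

theorem val_unitOrOne {x : k} (hx : x ≠ 0) : (unitOrOne x : k) = x := by
  simp [unitOrOne, hx]

theorem val_prod_pow_unitOrOne {x : ι → k} {β : ι → ℕ} (hx : ∀ i, β i ≠ 0 → x i ≠ 0) :
    ((∏ i, unitOrOne (x i) ^ β i : kˣ) : k) = ∏ i, x i ^ β i := by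
  push_cast
  exact prod_pow_congr_of_support fun i hi => val_unitOrOne (hx i hi)

theorem prod_pow_eq_of_mem_closure_of_ne_zero {u v : ι → k} {T : Set (ι → ℕ)}
    (hT : ∀ γ ∈ T, ∏ i, u i ^ γ i = ∏ i, v i ^ γ i)
    (hTsupp : ∀ γ ∈ T, ∀ i, γ i ≠ 0 → u i ≠ 0 ∧ v i ≠ 0) {α : ι → ℕ}
    (hαsupp : ∀ i, α i ≠ 0 → u i ≠ 0 ∧ v i ≠ 0)
    (hα : (fun i => (α i : ℤ)) ∈
      AddSubgroup.closure ((fun γ : ι → ℕ => fun i => (γ i : ℤ)) '' T)) :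
    ∏ i, u i ^ α i = ∏ i, v i ^ α i := by
  have hunits : ∏ i, unitOrOne (u i) ^ α i = ∏ i, unitOrOne (v i) ^ α i := by
    refine prod_pow_eq_of_mem_closure (fun γ hγ => Units.ext ?_) hα
    rw [val_prod_pow_unitOrOne fun i hi => (hTsupp γ hγ i hi).1,
      val_prod_pow_unitOrOne fun i hi => (hTsupp γ hγ i hi).2]
    exact hT γ hγ
  rw [← val_prod_pow_unitOrOne fun i hi => (hαsupp i hi).1,
    ← val_prod_pow_unitOrOne fun i hi => (hαsupp i hi).2, hunits]

end Field

theorem stmt_4_general (k : Type*) [Field k] (n : ℕ)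
    (L S : Set (Fin n → ℕ))
    (h1 : ∀ I : Set (Fin n), ∀ α ∈ L, (∀ i ∉ I, α i = 0) →
      (fun i => (α i : ℤ)) ∈ AddSubgroup.closure
        ((fun γ : Fin n → ℕ => fun i => (γ i : ℤ)) '' {γ ∈ S | ∀ i ∉ I, γ i = 0}))
    (h2 : ∀ α ∈ L, ∀ i, α i ≠ 0 → ∃ γ ∈ S, γ i ≠ 0 ∧ ∀ j, γ j ≠ 0 → α j ≠ 0)
    (u v : Fin n → k)
    (hsep : ∃ α ∈ L, (∏ i, u i ^ α i) ≠ ∏ i, v i ^ α i) :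
    ∃ γ ∈ S, (∏ i, u i ^ γ i) ≠ ∏ i, v i ^ γ i := by
  obtain ⟨α, hαL, hne⟩ := hsep
  by_contra! hS
  by_cases hzero : ∃ i, α i ≠ 0 ∧ (u i = 0 ∨ v i = 0)
  · obtain ⟨i, hαi, hi⟩ := hzero
    obtain ⟨γ, hγS, hγi, hγα⟩ := h2 α hαL i hαi
    have huγ : ∏ j, u j ^ γ j = 0 := by
      rcases hi with hu | hv
      · exact prod_pow_eq_zero_iff.2 ⟨i, hγi, hu⟩
      · exact (hS γ hγS).trans (prod_pow_eq_zero_iff.2 ⟨i, hγi, hv⟩)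
    have hvγ : ∏ j, v j ^ γ j = 0 := hS γ hγS ▸ huγ
    rw [prod_pow_eq_zero_of_support_subset hγα huγ,
      prod_pow_eq_zero_of_support_subset hγα hvγ] at hne
    exact hne rfl
  · push Not at hzero
    refine hne (prod_pow_eq_of_mem_closure_of_ne_zero (fun γ hγ => hS γ hγ.1) ?_ hzero
      (h1 {i | α i ≠ 0} α hαL fun i hi => not_not.1 hi))
    rintro γ ⟨-, hγI⟩ i hγi
    exact hzero i fun hαi => hγi (hγI i (not_not.2 hαi))

theorem stmt_4 (k : Type*) [Field k] (r n : ℕ) (A : Matrix (Fin r) (Fin n) ℤ)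
    (L S : Set (Fin n → ℕ))
    (hL : L = {α | A.mulVec (fun i => (α i : ℤ)) = 0})
    (hSL : S ⊆ L)
    (hSadd : ∀ a ∈ S, ∀ b ∈ S, a + b ∈ S)
    (h1 : ∀ I : Set (Fin n), ∀ α ∈ L, (∀ i ∉ I, α i = 0) →
      (fun i => (α i : ℤ)) ∈ AddSubgroup.closure
        ((fun γ : Fin n → ℕ => fun i => (γ i : ℤ)) '' {γ ∈ S | ∀ i ∉ I, γ i = 0}))
    (h2 : ∀ α ∈ L, ∀ i, α i ≠ 0 → ∃ γ ∈ S, γ i ≠ 0 ∧ ∀ j, γ j ≠ 0 → α j ≠ 0)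
    (u v : Fin n → k)
    (hsep : ∃ α ∈ L, (∏ i, u i ^ α i) ≠ ∏ i, v i ^ α i) :
    ∃ γ ∈ S, (∏ i, u i ^ γ i) ≠ ∏ i, v i ^ γ i :=
  stmt_4_general k n L S h1 h2 u v hsep
end

section
/- Let k be an algebraically closed field of characteristic zero, let L ⊆ N^n be a subsemigroup, and let S ⊆ L be a subsemigroup. Suppose there exist two distinct primes p and q and an integer m ≥ 1 such that p^m · L ⊆ S and q^m · L ⊆ S. Then S is separating for L: for any u, v ∈ k^n, if there exists α ∈ L with u^α ≠ v^α, then there exists γ ∈ S with u^γ ≠ v^γ. -/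
/-!
If the monomials of `u` and `v` at `α` were to differ while those at `p^m • α` and `q^m • α`
agree, then `x := u^α` and `y := v^α` would satisfy `x^(p^m) = y^(p^m)` and `x^(q^m) = y^(q^m)`.
As `p^m` and `q^m` are coprime, this forces `x = y`: for `y ≠ 0` the quotient `x / y` is a root
of unity of coprime orders `p^m` and `q^m`, hence `1`.
-/

lemma eq_of_pow_eq_pow_of_coprime {α : Type*} [CommGroupWithZero α] {a b : α} {m n : ℕ}
    (hmn : m.Coprime n) (ham : a ^ m = b ^ m) (han : a ^ n = b ^ n) : a = b := by
  by_cases hb : b = 0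
  · subst hb
    by_cases hm : m = 0
    · rw [hm, Nat.coprime_zero_left] at hmn
      simpa [hmn] using han
    · exact pow_eq_zero_iff hm |>.mp (ham.trans (zero_pow hm))
  · have hdiv : (a / b) ^ m = 1 ∧ (a / b) ^ n = 1 := by
      simp only [div_pow, ham, han, div_self (pow_ne_zero _ hb), and_self]
    exact div_eq_one_iff_eq hb |>.mp ((pow_eq_one_iff_of_coprime hmn).mp hdiv)

lemma Finset.prod_pow_mul {ι M : Type*} [CommMonoid M] (s : Finset ι) (u : ι → M) (c : ℕ)
    (α : ι → ℕ) : ∏ i ∈ s, u i ^ (c * α i) = (∏ i ∈ s, u i ^ α i) ^ c := by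
  simp_rw [pow_mul', Finset.prod_pow]

theorem stmt_6_general (k : Type*) [Field k]
    (n : ℕ) (L S : Set (Fin n → ℕ))
    (p q : ℕ) (hp : p.Prime) (hq : q.Prime) (hpq : p ≠ q)
    (m : ℕ)
    (hpL : ∀ α ∈ L, (fun i => p ^ m * α i) ∈ S)
    (hqL : ∀ α ∈ L, (fun i => q ^ m * α i) ∈ S)
    (u v : Fin n → k)
    (hsep : ∃ α ∈ L, (∏ i, u i ^ α i) ≠ ∏ i, v i ^ α i) :
    ∃ γ ∈ S, (∏ i, u i ^ γ i) ≠ ∏ i, v i ^ γ i := by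
  obtain ⟨α, hαL, hne⟩ := hsep
  by_contra! hS
  have hp_pow := hS _ (hpL α hαL)
  have hq_pow := hS _ (hqL α hαL)
  simp only [Finset.prod_pow_mul] at hp_pow hq_pow
  exact hne (eq_of_pow_eq_pow_of_coprime (Nat.coprime_pow_primes m m hp hq hpq) hp_pow hq_pow)

theorem stmt_6 (k : Type*) [Field k] [IsAlgClosed k] [CharZero k]
    (n : ℕ) (L S : Set (Fin n → ℕ)) (hSL : S ⊆ L)
    (hLadd : ∀ a ∈ L, ∀ b ∈ L, a + b ∈ L)
    (hSadd : ∀ a ∈ S, ∀ b ∈ S, a + b ∈ S)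
    (p q : ℕ) (hp : p.Prime) (hq : q.Prime) (hpq : p ≠ q)
    (m : ℕ) (hm : 1 ≤ m)
    (hpL : ∀ α ∈ L, (fun i => p ^ m * α i) ∈ S)
    (hqL : ∀ α ∈ L, (fun i => q ^ m * α i) ∈ S)
    (u v : Fin n → k)
    (hsep : ∃ α ∈ L, (∏ i, u i ^ α i) ≠ ∏ i, v i ^ α i) :
    ∃ γ ∈ S, (∏ i, u i ^ γ i) ≠ ∏ i, v i ^ γ i :=
  stmt_6_general k n L S p q hp hq hpq m hpL hqL u v hsep
end

section
/- Let A be an r × n integer matrix of rank r with columns m_1, ..., m_r, let L = ker_Z(A) ∩ N^n, and suppose α ∈ L with α_{i_0} ≠ 0 and |supp(α)| > r + 1. Then there exists γ ∈ L with γ_{i_0} ≠ 0, supp(γ) ⊆ supp(α), and |supp(γ)| ≤ r + 2. -/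
/-!
Take `γ ≥ 0` in the kernel with `γ i₀ ≠ 0` and `supp γ ⊆ supp α`, of minimal support. If
`|supp γ| > r + 1`, the columns indexed by `supp γ \ {i₀}` (more than `r` vectors of `ℤ^r`) admit a
nonzero integer relation `b`, which we may take to have a negative entry. The
Carathéodory-type exchange `(-b i) • γ + (γ i) • b`, at the index `i` minimising `γ i / -b i` over
`b i < 0`, stays nonnegative, keeps `i₀` (since `b i₀ = 0`) and loses `i`, contradicting
minimality. Hence `|supp γ| ≤ r + 1`.
-/

open Finset Matrix

theorem Matrix.exists_ne_zero_mulVec_eq_zero_of_card_lt {m ι R : Type*} [Fintype m] [Fintype ι]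
    [CommRing R] [StrongRankCondition R] (A : Matrix m ι R) {T : Finset ι}
    (hT : Fintype.card m < #T) :
    ∃ b ≠ 0, (∀ i ∉ T, b i = 0) ∧ A *ᵥ b = 0 := by
  have hdep : ¬LinearIndepOn R (fun i k ↦ A k i) (T : Set ι) := fun h ↦ by
    have := h.fintype_card_le_finrank
    simp only [Finset.coe_sort_coe, Fintype.card_coe, Module.finrank_fintype_fun_eq_card] at this
    omega
  obtain ⟨f, hfT, hf, hf0⟩ := linearDepOn_iff'.mp hdep
  refine ⟨f, fun h ↦ hf0 (DFunLike.coe_injective h), fun i hi ↦ ?_, ?_⟩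
  · exact Finsupp.notMem_support_iff.mp fun h ↦ hi (hfT h)
  · rw [← hf, Finsupp.linearCombination_apply, Finsupp.sum_fintype _ _ (by simp)]
    ext k
    simp [mulVec, dotProduct, Finset.sum_apply, mul_comm]

theorem exists_neg_nonneg_combination {ι : Type*} [Fintype ι] (a b : ι → ℤ) (ha : 0 ≤ a)
    (hb : ∃ j, b j < 0) : ∃ i, b i < 0 ∧ 0 ≤ -b i • a + a i • b := by
  classical
  obtain ⟨i, hi, hmin⟩ := (univ.filter fun j ↦ b j < 0).exists_min_image
    (fun j ↦ (a j : ℚ) / -b j) (by simpa [Finset.Nonempty] using hb)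
  simp only [mem_filter, mem_univ, true_and] at hi hmin
  refine ⟨i, hi, fun j ↦ ?_⟩
  simp only [Pi.zero_apply, Pi.add_apply, Pi.smul_apply, smul_eq_mul]
  rcases lt_or_ge (b j) 0 with hj | hj
  · have := hmin j hj
    rw [div_le_div_iff₀ (by exact_mod_cast neg_pos.mpr hi)
      (by exact_mod_cast neg_pos.mpr hj)] at this
    have : a i * -b j ≤ a j * -b i := by exact_mod_cast this
    linarith
  · have hai : 0 ≤ a i := ha i
    have haj : 0 ≤ a j := ha j
    nlinarith

section

variable {m ι : Type*} [Fintype m] [Fintype ι] (A : Matrix m ι ℤ) {a : ι → ℤ} {i₀ : ι}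

theorem exists_nonneg_mulVec_eq_zero_support_ssubset (ha : 0 ≤ a) (hA : A *ᵥ a = 0)
    (hi₀ : a i₀ ≠ 0) (hcard : Fintype.card m + 1 < #{i | a i ≠ 0}) :
    ∃ c, 0 ≤ c ∧ A *ᵥ c = 0 ∧ c i₀ ≠ 0 ∧
      ({i | c i ≠ 0} : Finset ι) ⊂ ({i | a i ≠ 0} : Finset ι) := by
  classical
  set T := ({i | a i ≠ 0} : Finset ι).erase i₀
  have hT : Fintype.card m < #T := by
    rw [card_erase_of_mem (by simpa using hi₀)]
    omega
  have hTa : ∀ i ∈ T, a i ≠ 0 := fun i hi ↦ by simpa using mem_of_mem_erase hi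
  obtain ⟨b, hbT, hbA, hneg⟩ : ∃ b : ι → ℤ, (∀ i ∉ T, b i = 0) ∧ A *ᵥ b = 0 ∧ ∃ j, b j < 0 := by
    obtain ⟨b, hb0, hbT, hbA⟩ := A.exists_ne_zero_mulVec_eq_zero_of_card_lt hT
    by_cases hneg : ∃ j, b j < 0
    · exact ⟨b, hbT, hbA, hneg⟩
    · obtain ⟨j, hj⟩ := Function.ne_iff.mp hb0
      refine ⟨-b, fun i hi ↦ by simp [hbT i hi], by simp [mulVec_neg, hbA], j, ?_⟩
      push Not at hneg
      simpa using lt_of_le_of_ne (hneg j) (Ne.symm hj)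
  obtain ⟨i, hi, hc⟩ := exists_neg_nonneg_combination a b ha hneg
  have hbi₀ : b i₀ = 0 := hbT i₀ (by simp [T])
  have hsub : ∀ j, -b i * a j + a i * b j ≠ 0 → a j ≠ 0 := fun j hj haj ↦ by
    rw [haj, hbT j fun h ↦ hTa j h haj] at hj
    simp at hj
  refine ⟨-b i • a + a i • b, hc, by
    simp only [mulVec_add, mulVec_smul, hA, hbA, smul_zero, add_zero], ?_, ?_⟩
  · simpa [hbi₀] using ⟨hi.ne, hi₀⟩
  · rw [ssubset_iff_of_subset fun j ↦ by simpa using hsub j]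
    refine ⟨i, ?_, by simp [mul_comm]⟩
    simpa using hTa i (by_contra fun hiT ↦ hi.ne (hbT i hiT))

theorem exists_nonneg_mulVec_eq_zero_card_support_le (ha : 0 ≤ a) (hA : A *ᵥ a = 0)
    (hi₀ : a i₀ ≠ 0) :
    ∃ c, 0 ≤ c ∧ A *ᵥ c = 0 ∧ c i₀ ≠ 0 ∧
      ({i | c i ≠ 0} : Finset ι) ⊆ ({i | a i ≠ 0} : Finset ι) ∧
      #{i | c i ≠ 0} ≤ Fintype.card m + 1 := by
  induction hs : ({i | a i ≠ 0} : Finset ι) using Finset.strongInduction generalizing a with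
  | H s ih =>
    by_cases hcard : #s ≤ Fintype.card m + 1
    · exact ⟨a, ha, hA, hi₀, hs.subset, hs ▸ hcard⟩
    obtain ⟨c, hc, hcA, hci₀, hcs⟩ :=
      exists_nonneg_mulVec_eq_zero_support_ssubset A ha hA hi₀ (by rw [hs]; omega)
    obtain ⟨d, hd, hdA, hdi₀, hdc, hdcard⟩ := ih _ (hs ▸ hcs) hc hcA hci₀ rfl
    exact ⟨d, hd, hdA, hdi₀, hdc.trans (hs ▸ hcs.subset), hdcard⟩

end

theorem stmt_7_general (r n : ℕ) (A : Matrix (Fin r) (Fin n) ℤ)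
    (α : Fin n → ℕ) (hα : A.mulVec (fun i => (α i : ℤ)) = 0)
    (i0 : Fin n) (hi0 : α i0 ≠ 0) :
    ∃ γ : Fin n → ℕ, A.mulVec (fun i => (γ i : ℤ)) = 0 ∧ γ i0 ≠ 0 ∧
      (∀ i, γ i ≠ 0 → α i ≠ 0) ∧
      (Finset.univ.filter fun i => γ i ≠ 0).card ≤ r + 2 := by
  obtain ⟨c, hc, hcA, hci0, hcα, hcard⟩ := exists_nonneg_mulVec_eq_zero_card_support_le A
    (a := fun i ↦ (α i : ℤ)) (fun i ↦ by positivity) hα (by exact_mod_cast hi0)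
  lift c to Fin n → ℕ using hc
  refine ⟨c, hcA, by simpa using hci0, fun i hi ↦ ?_, ?_⟩
  · simpa using hcα (by simpa using hi)
  · simpa using hcard.trans (by simp)

theorem stmt_7 (r n : ℕ) (A : Matrix (Fin r) (Fin n) ℤ) (hrank : A.rank = r)
    (α : Fin n → ℕ) (hα : A.mulVec (fun i => (α i : ℤ)) = 0)
    (i0 : Fin n) (hi0 : α i0 ≠ 0)
    (hsupp : r + 1 < (Finset.univ.filter fun i => α i ≠ 0).card) :
    ∃ γ : Fin n → ℕ, A.mulVec (fun i => (γ i : ℤ)) = 0 ∧ γ i0 ≠ 0 ∧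
      (∀ i, γ i ≠ 0 → α i ≠ 0) ∧
      (Finset.univ.filter fun i => γ i ≠ 0).card ≤ r + 2 :=
  stmt_7_general r n A α hα i0 hi0
end

section
/- Graph-closure membership for disjoint nullcone components: Let m_1, ..., m_n ∈ Z^r be weights, let I, J ⊆ {1,...,n} be disjoint, and suppose there exists δ ∈ Z^r with δ · m_i > 0 for all i ∈ I and δ · m_j < 0 for all j ∈ J. For u supported in I and v supported in J (vectors in k^n over a field k), and for t ∈ k^×, define t ⋆ w = (t^{δ·m_1} w_1, ..., t^{δ·m_n} w_n). Then the map t ↦ (u + t^{-1} ⋆ v, t ⋆ u + v), defined for t ≠ 0, extends to a morphism of the affine line such that at t = 0 its value is (u, v). Consequently (u,v) lies in the Zariski closure of {(w, t ⋆ w) : w ∈ k^n, t ∈ k^×}. -/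
/-! Because `u` lives where the weights `δ · mᵢ` are positive and `v` where they are negative,
the curve `t ↦ (u + t⁻¹ ⋆ v, t ⋆ u + v)` has polynomial coordinates; for `t ≠ 0` it lies on the
graph `{(w, t ⋆ w)}` and at `t = 0` it passes through `(u, v)`. A polynomial vanishing on the graph
vanishes along the curve at the infinitely many `t ≠ 0`, hence identically, in particular at `0`. -/

open Polynomial

theorem Polynomial.eval_aeval_eq_eval {k ι : Type*} [CommSemiring k] (γ : ι → k[X])
    (P : MvPolynomial ι k) (t : k) :
    (MvPolynomial.aeval γ P).eval t = MvPolynomial.eval (fun i => (γ i).eval t) P := by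
  rw [MvPolynomial.aeval_def, MvPolynomial.polynomial_eval_eval₂, MvPolynomial.eval,
    MvPolynomial.coe_eval₂Hom]
  congr
  ext
  simp

theorem MvPolynomial.eval_eq_zero_of_eval_curve_eq_zero {k ι : Type*} [Field k] [Infinite k]
    (γ : ι → k[X]) (P : MvPolynomial ι k)
    (h : ∀ t : k, t ≠ 0 → eval (fun i => (γ i).eval t) P = 0) (s : k) :
    eval (fun i => (γ i).eval s) P = 0 := by
  have hcurve : aeval γ P = 0 := by
    refine Polynomial.eq_zero_of_infinite_isRoot _ ((Set.finite_singleton 0).infinite_compl.mono ?_)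
    intro t ht
    simpa [Polynomial.eval_aeval_eq_eval] using h t ht
  rw [← Polynomial.eval_aeval_eq_eval, hcurve, Polynomial.eval_zero]

theorem zero_pow_toNat_mul_eq_zero {M : Type*} [MonoidWithZero M] {e : ℤ} {a : M}
    (h : a ≠ 0 → 0 < e) : (0 : M) ^ e.toNat * a = 0 := by
  by_cases ha : a = 0
  · rw [ha, mul_zero]
  · rw [zero_pow (by have := h ha; omega), zero_mul]

theorem zpow_mul_add_pow_toNat_neg_mul {K : Type*} [Field K] {t : K} (ht : t ≠ 0) {d : ℤ}
    {a b : K} (ha : a ≠ 0 → 0 < d) (hb : b ≠ 0 → d < 0) :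
    t ^ d * (a + t ^ (-d).toNat * b) = t ^ d.toNat * a + b := by
  rcases le_or_gt 0 d with hd | hd
  · have hb0 : b = 0 := by by_contra hb'; exact (hb hb').not_ge hd
    rw [hb0, mul_zero, add_zero, add_zero, ← zpow_natCast, Int.toNat_of_nonneg hd]
  · have ha0 : a = 0 := by by_contra ha'; exact (ha ha').not_gt hd
    have hinv : t ^ d * t ^ (-d).toNat = 1 := by
      rw [← zpow_natCast, Int.toNat_of_nonneg (by omega), ← zpow_add₀ ht, add_neg_cancel, zpow_zero]
    rw [ha0, zero_add, mul_zero, zero_add, ← mul_assoc, hinv, one_mul]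

theorem stmt_14_general (k : Type*) [Field k] [IsAlgClosed k] (r n : ℕ)
    (m : Fin n → Fin r → ℤ) (δ : Fin r → ℤ) (I J : Finset (Fin n))
    (hI : ∀ i ∈ I, 0 < ∑ jj, δ jj * m i jj)
    (hJ : ∀ j ∈ J, (∑ jj, δ jj * m j jj) < 0)
    (u v : Fin n → k)
    (hu : ∀ i, u i ≠ 0 → i ∈ I) (hv : ∀ i, v i ≠ 0 → i ∈ J) :
    let d : Fin n → ℤ := fun i => ∑ jj, δ jj * m i jj
    let F : k → (Fin n → k) × (Fin n → k) := fun t =>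
      (fun i => u i + t ^ (-(d i)).toNat * v i, fun i => t ^ (d i).toNat * u i + v i)
    (∀ t : k, t ≠ 0 → ∀ i, (F t).2 i = t ^ (d i) * (F t).1 i) ∧
    F 0 = (u, v) ∧
    (∀ P : MvPolynomial (Fin n ⊕ Fin n) k,
      (∀ (w : Fin n → k) (t : k), t ≠ 0 →
        MvPolynomial.eval (Sum.elim w (fun i => t ^ (d i) * w i)) P = 0) →
      MvPolynomial.eval (Sum.elim u v) P = 0) := by
  intro d F
  have hud : ∀ i, u i ≠ 0 → 0 < d i := fun i h => hI i (hu i h)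
  have hvd : ∀ i, v i ≠ 0 → 0 < -d i := fun i h => neg_pos.2 (hJ i (hv i h))
  have hF : ∀ t : k, t ≠ 0 → ∀ i, (F t).2 i = t ^ (d i) * (F t).1 i := fun t ht i =>
    (zpow_mul_add_pow_toNat_neg_mul ht (hud i) (fun h => neg_pos.1 (hvd i h))).symm
  have hF0 : F 0 = (u, v) := Prod.ext
    (funext fun i => by simp only [F, zero_pow_toNat_mul_eq_zero (hvd i), add_zero])
    (funext fun i => by simp only [F, zero_pow_toNat_mul_eq_zero (hud i), zero_add])
  refine ⟨hF, hF0, fun P hP => ?_⟩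
  let γ : Fin n ⊕ Fin n → k[X] := Sum.elim
    (fun i => C (u i) + X ^ (-d i).toNat * C (v i)) (fun i => X ^ (d i).toNat * C (u i) + C (v i))
  have hγ : ∀ t, (fun s => (γ s).eval t) = Sum.elim (F t).1 (F t).2 := fun t => by
    ext (i | i) <;>
      simp only [γ, F, Sum.elim_inl, Sum.elim_inr, eval_add, eval_mul, eval_pow, eval_C, eval_X]
  have hγ0 := MvPolynomial.eval_eq_zero_of_eval_curve_eq_zero γ P (fun t ht => by
    rw [hγ, show (F t).2 = fun i => t ^ d i * (F t).1 i from funext (hF t ht)]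
    exact hP _ t ht) 0
  rwa [hγ, hF0] at hγ0

theorem stmt_14 (k : Type*) [Field k] [IsAlgClosed k] (r n : ℕ)
    (m : Fin n → Fin r → ℤ) (δ : Fin r → ℤ) (I J : Finset (Fin n))
    (hIJ : Disjoint I J)
    (hI : ∀ i ∈ I, 0 < ∑ jj, δ jj * m i jj)
    (hJ : ∀ j ∈ J, (∑ jj, δ jj * m j jj) < 0)
    (u v : Fin n → k)
    (hu : ∀ i, u i ≠ 0 → i ∈ I) (hv : ∀ i, v i ≠ 0 → i ∈ J) :
    let d : Fin n → ℤ := fun i => ∑ jj, δ jj * m i jj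
    let F : k → (Fin n → k) × (Fin n → k) := fun t =>
      (fun i => u i + t ^ (-(d i)).toNat * v i, fun i => t ^ (d i).toNat * u i + v i)
    (∀ t : k, t ≠ 0 → ∀ i, (F t).2 i = t ^ (d i) * (F t).1 i) ∧
    F 0 = (u, v) ∧
    (∀ P : MvPolynomial (Fin n ⊕ Fin n) k,
      (∀ (w : Fin n → k) (t : k), t ≠ 0 →
        MvPolynomial.eval (Sum.elim w (fun i => t ^ (d i) * w i)) P = 0) →
      MvPolynomial.eval (Sum.elim u v) P = 0) :=
  stmt_14_general k r n m δ I J hI hJ u v hu hv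
end
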